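/- For σ ∈ (0,1) define r(σ) := (σ/π) ∫_{−√(−ln σ)}^{√(−ln σ)} (e^{−2x²} − σ²)^{−1/2} dx, and define F(t) := ∫_0^{√(−ln t)} √(e^{−2x²} − t²) dx. Then for every s ∈ (0,1), ∫_s^1 r(σ) dσ = (2/π) F(s). -/

import Mathlib

/-!
Write `r σ` as `π⁻¹` times the integral of `σ (e^{-2x²} - σ²)^{-1/2}` over the level set
`{x | σ ≤ e^{-x²}}`, integrate over `σ > s` and swap the two integrals (the integrand is
nonnegative on the region `s < σ ≤ e^{-x²}`). For fixed `x` the inner integral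
`∫_s^{e^{-x²}} σ (e^{-2x²} - σ²)^{-1/2} dσ` equals `√(e^{-2x²} - s²)`, since the integrand is the
derivative of `-√(e^{-2x²} - σ²)`; what remains is the integral of an even function over
`{x | s < e^{-x²}} = (-√(-log s), √(-log s))`, i.e. `2 F(s)`.
-/

open MeasureTheory intervalIntegral

/-- The (real form of the) WKB eigenvalue density for the Gaussian potential:
`r(σ) = (σ/π) ∫_{−√(−ln σ)}^{√(−ln σ)} (e^{−2x²} − σ²)^{−1/2} dx`. -/
noncomputable def r (σ : ℝ) : ℝ :=
  (σ / Real.pi) *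
    ∫ x in (-(Real.sqrt (-Real.log σ)))..(Real.sqrt (-Real.log σ)),
      (Real.exp (-2 * x ^ 2) - σ ^ 2) ^ (-(1 : ℝ) / 2)

/-- The WKB quantization integral for the Gaussian potential `A₀(x) = e^{−x²}`. -/
noncomputable def F (t : ℝ) : ℝ :=
  ∫ x in (0 : ℝ)..(Real.sqrt (-Real.log t)), Real.sqrt (Real.exp (-2 * x ^ 2) - t ^ 2)

open Set

section ArcsineKernel

variable {s c : ℝ}

theorem hasDerivAt_neg_sqrt_sq_sub_sq {σ : ℝ} (hσ : |σ| < c) :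
    HasDerivAt (fun t : ℝ => -√(c ^ 2 - t ^ 2)) (σ * (c ^ 2 - σ ^ 2) ^ (-(1 : ℝ) / 2)) σ := by
  have hpos : 0 < c ^ 2 - σ ^ 2 := by
    nlinarith [sq_abs σ, abs_nonneg σ]
  refine (((hasDerivAt_pow 2 σ).const_sub (c ^ 2)).sqrt hpos.ne').neg.congr_deriv ?_
  rw [show -(1 : ℝ) / 2 = -(1 / 2) by ring, Real.rpow_neg hpos.le, ← Real.sqrt_eq_rpow]
  field_simp
  ring

theorem integrableOn_mul_rpow_sq_sub_sq (hs : 0 ≤ s) :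
    IntegrableOn (fun σ : ℝ => σ * (c ^ 2 - σ ^ 2) ^ (-(1 : ℝ) / 2)) (Ioc s c) := by
  refine intervalIntegral.integrableOn_deriv_of_nonneg (by fun_prop)
    (fun σ hσ => hasDerivAt_neg_sqrt_sq_sub_sq ?_) fun σ hσ => ?_
  · rw [abs_of_nonneg (hs.trans hσ.1.le)]; exact hσ.2
  · have hσ0 : 0 ≤ σ := hs.trans hσ.1.le
    have : 0 ≤ c ^ 2 - σ ^ 2 := by nlinarith [hσ.2]
    positivity

theorem integral_mul_rpow_sq_sub_sq (hs : 0 ≤ s) (hsc : s ≤ c) :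
    ∫ σ in Ioc s c, σ * (c ^ 2 - σ ^ 2) ^ (-(1 : ℝ) / 2) = √(c ^ 2 - s ^ 2) := by
  rw [← intervalIntegral.integral_of_le hsc,
    intervalIntegral.integral_eq_sub_of_hasDerivAt_of_le hsc (by fun_prop)
      (fun σ hσ => hasDerivAt_neg_sqrt_sq_sub_sq ?_)
      ((intervalIntegrable_iff_integrableOn_Ioc_of_le hsc).2
        (integrableOn_mul_rpow_sq_sub_sq hs))]
  · simp
  · rw [abs_of_nonneg (hs.trans hσ.1.le)]; exact hσ.2

theorem integral_indicator_Ioc_mul_rpow_sq_sub_sq (hs : 0 ≤ s) :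
    ∫ σ, (Ioc s c).indicator (fun σ => σ * (c ^ 2 - σ ^ 2) ^ (-(1 : ℝ) / 2)) σ =
      (Ioi s).indicator (fun t => √(t ^ 2 - s ^ 2)) c := by
  rw [MeasureTheory.integral_indicator measurableSet_Ioc]
  by_cases hsc : s < c
  · rw [indicator_of_mem (mem_Ioi.2 hsc), integral_mul_rpow_sq_sub_sq hs hsc.le]
  · rw [indicator_of_notMem (notMem_Ioi.2 (not_lt.1 hsc)), Ioc_eq_empty hsc,
      Measure.restrict_empty, integral_zero_measure]

end ArcsineKernel

section Superlevel

variable {A : ℝ → ℝ} {s : ℝ}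

noncomputable def superlevelKernel (A : ℝ → ℝ) (s : ℝ) : ℝ × ℝ → ℝ :=
  {p | s < p.1 ∧ p.1 ≤ A p.2}.indicator fun p => p.1 * (A p.2 ^ 2 - p.1 ^ 2) ^ (-(1 : ℝ) / 2)

theorem measurable_superlevelKernel (hA : Measurable A) : Measurable (superlevelKernel A s) :=
  Measurable.indicator (by fun_prop) <| (measurableSet_lt measurable_const measurable_fst).inter
    (measurableSet_le measurable_fst (hA.comp measurable_snd))

theorem superlevelKernel_nonneg (hs : 0 ≤ s) (p : ℝ × ℝ) : 0 ≤ superlevelKernel A s p := by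
  refine indicator_nonneg (fun q hq => ?_) p
  have hq0 : 0 ≤ q.1 := hs.trans hq.1.le
  have : 0 ≤ A q.2 ^ 2 - q.1 ^ 2 := by nlinarith [hq.2]
  positivity

theorem superlevelKernel_apply_left (x : ℝ) : (fun σ => superlevelKernel A s (σ, x)) =
    (Ioc s (A x)).indicator fun σ => σ * (A x ^ 2 - σ ^ 2) ^ (-(1 : ℝ) / 2) := by
  ext σ
  simp only [superlevelKernel, indicator_apply, mem_ofPred_eq, mem_Ioc]

theorem integral_superlevelKernel_left (hs : 0 ≤ s) (x : ℝ) :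
    ∫ σ, superlevelKernel A s (σ, x) =
      {x | s < A x}.indicator (fun x => √(A x ^ 2 - s ^ 2)) x := by
  rw [superlevelKernel_apply_left, integral_indicator_Ioc_mul_rpow_sq_sub_sq hs]
  rfl

theorem integral_superlevelKernel_right (hA : Measurable A) (σ : ℝ) :
    ∫ x, superlevelKernel A s (σ, x) = (Ioi s).indicator
      (fun σ => ∫ x in {x | σ ≤ A x}, σ * (A x ^ 2 - σ ^ 2) ^ (-(1 : ℝ) / 2)) σ := by
  by_cases hσ : s < σ
  · rw [indicator_of_mem (mem_Ioi.2 hσ),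
      ← MeasureTheory.integral_indicator (measurableSet_le measurable_const hA)]
    congr 1 with x
    simp only [superlevelKernel, indicator_apply, mem_ofPred_eq, hσ, true_and]
  · rw [indicator_of_notMem (notMem_Ioi.2 (not_lt.1 hσ))]
    simp [superlevelKernel, hσ]

theorem integrable_superlevelKernel (hA : Measurable A) (hs : 0 ≤ s)
    (hint : IntegrableOn (fun x => √(A x ^ 2 - s ^ 2)) {x | s < A x}) :
    Integrable (superlevelKernel A s) (volume.prod volume) := by
  refine (integrable_prod_iff' (measurable_superlevelKernel hA).aestronglyMeasurable).2
    ⟨ae_of_all _ fun x => ?_, ?_⟩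
  · rw [superlevelKernel_apply_left, integrable_indicator_iff measurableSet_Ioc]
    exact integrableOn_mul_rpow_sq_sub_sq hs
  · simp_rw [fun p => Real.norm_of_nonneg (superlevelKernel_nonneg (A := A) hs p),
      integral_superlevelKernel_left hs]
    exact (integrable_indicator_iff (measurableSet_lt measurable_const hA)).2 hint

theorem setIntegral_Ioi_superlevel_mul_rpow_sq_sub_sq (hA : Measurable A) (hs : 0 ≤ s)
    (hint : IntegrableOn (fun x => √(A x ^ 2 - s ^ 2)) {x | s < A x}) :
    ∫ σ in Ioi s, ∫ x in {x | σ ≤ A x}, σ * (A x ^ 2 - σ ^ 2) ^ (-(1 : ℝ) / 2) =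
      ∫ x in {x | s < A x}, √(A x ^ 2 - s ^ 2) := by
  calc ∫ σ in Ioi s, ∫ x in {x | σ ≤ A x}, σ * (A x ^ 2 - σ ^ 2) ^ (-(1 : ℝ) / 2)
      = ∫ σ, ∫ x, superlevelKernel A s (σ, x) := by
        rw [← MeasureTheory.integral_indicator measurableSet_Ioi]
        exact integral_congr_ae (ae_of_all _ fun σ => (integral_superlevelKernel_right hA σ).symm)
    _ = ∫ x, ∫ σ, superlevelKernel A s (σ, x) :=
        integral_integral_swap (integrable_superlevelKernel hA hs hint)
    _ = ∫ x in {x | s < A x}, √(A x ^ 2 - s ^ 2) := by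
        simp_rw [integral_superlevelKernel_left hs]
        exact MeasureTheory.integral_indicator (measurableSet_lt measurable_const hA)

end Superlevel

theorem intervalIntegral.integral_neg_eq_two_smul_of_even {E : Type*} [NormedAddCommGroup E]
    [NormedSpace ℝ E] {f : ℝ → E} {a : ℝ} (hf : ∀ x, f (-x) = f x)
    (hint : IntervalIntegrable f volume 0 a) :
    ∫ x in -a..a, f x = (2 : ℝ) • ∫ x in 0..a, f x := by
  have hleft : ∫ x in -a..0, f x = ∫ x in 0..a, f x := by
    simpa [hf] using (integral_comp_neg (a := 0) (b := a) f).symm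
  have hint' : IntervalIntegrable f volume (-a) 0 := by
    simpa [hf] using ((IntervalIntegrable.iff_comp_neg (by simp)).1 hint).symm
  rw [← integral_add_adjacent_intervals hint' hint, hleft, two_smul]

section Gaussian

open Real

theorem exp_neg_sq_sq (x : ℝ) : exp (-x ^ 2) ^ 2 = exp (-2 * x ^ 2) := by
  rw [← exp_nat_mul]; ring_nf

theorem setOf_le_exp_neg_sq {σ : ℝ} (h0 : 0 < σ) (h1 : σ ≤ 1) :
    {x : ℝ | σ ≤ exp (-x ^ 2)} = Icc (-√(-log σ)) √(-log σ) := by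
  ext x
  rw [mem_ofPred_eq, mem_Icc, ← abs_le, ← log_le_iff_le_exp h0, le_neg, ← sq_abs x,
    Real.le_sqrt (abs_nonneg x) (neg_nonneg.2 (log_nonpos h0.le h1))]

theorem setOf_le_exp_neg_sq_of_one_lt {σ : ℝ} (h1 : 1 < σ) :
    {x : ℝ | σ ≤ exp (-x ^ 2)} = ∅ :=
  eq_empty_of_forall_notMem fun x hx =>
    (h1.trans_le hx).not_ge (exp_le_one_iff.2 (neg_nonpos.2 (sq_nonneg x)))

theorem setOf_lt_exp_neg_sq {s : ℝ} (h0 : 0 < s) :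
    {x : ℝ | s < exp (-x ^ 2)} = Ioo (-√(-log s)) √(-log s) := by
  ext x
  rw [mem_ofPred_eq, mem_Ioo, ← abs_lt, ← log_lt_iff_lt_exp h0, lt_neg, ← sq_abs x,
    Real.lt_sqrt (abs_nonneg x)]

theorem r_eq_setIntegral {σ : ℝ} (h0 : 0 < σ) :
    r σ = π⁻¹ * ∫ x in {x | σ ≤ exp (-x ^ 2)},
      σ * (exp (-x ^ 2) ^ 2 - σ ^ 2) ^ (-(1 : ℝ) / 2) := by
  rcases le_or_gt σ 1 with h1 | h1
  · rw [setOf_le_exp_neg_sq h0 h1, integral_Icc_eq_integral_Ioc,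
      ← integral_of_le (neg_le_self (sqrt_nonneg _)), intervalIntegral.integral_const_mul, r]
    simp_rw [exp_neg_sq_sq]
    ring
  · -- for `σ > 1` both sides vanish: `√(-log σ) = 0` and the level set is empty
    rw [setOf_le_exp_neg_sq_of_one_lt h1, r,
      sqrt_eq_zero'.2 (neg_nonpos.2 (log_nonneg h1.le))]
    simp

end Gaussian

/-- For every `s ∈ (0,1)`, `∫_s^1 r(σ) dσ = (2/π) F(s)`. -/
theorem wkb_density_integral (s : ℝ) (hs : s ∈ Set.Ioo (0 : ℝ) 1) :
    ∫ σ in s..1, r σ = (2 / Real.pi) * F s := by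
  obtain ⟨hs0, hs1⟩ := hs
  have hcont : Continuous fun x => √(Real.exp (-x ^ 2) ^ 2 - s ^ 2) := by fun_prop
  have hlayer := setIntegral_Ioi_superlevel_mul_rpow_sq_sub_sq (A := fun x => Real.exp (-x ^ 2))
    (by fun_prop) hs0.le (by
      rw [setOf_lt_exp_neg_sq hs0]
      exact hcont.integrableOn_Icc.mono_set Ioo_subset_Icc_self)
  calc ∫ σ in s..1, r σ
      = ∫ σ in Ioi s, Real.pi⁻¹ * ∫ x in {x | σ ≤ Real.exp (-x ^ 2)},
          σ * (Real.exp (-x ^ 2) ^ 2 - σ ^ 2) ^ (-(1 : ℝ) / 2) := by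
        rw [integral_of_le hs1.le, setIntegral_eq_of_subset_of_forall_sdiff_eq_zero
          measurableSet_Ioi Ioc_subset_Ioi_self]
        · exact setIntegral_congr_fun measurableSet_Ioc fun σ hσ =>
            r_eq_setIntegral (hs0.trans hσ.1)
        · rintro σ ⟨hsσ, hσ⟩
          rw [setOf_le_exp_neg_sq_of_one_lt (not_le.1 fun h => hσ ⟨hsσ, h⟩)]
          simp
    _ = Real.pi⁻¹ * ∫ x in Ioo (-√(-Real.log s)) √(-Real.log s),
          √(Real.exp (-x ^ 2) ^ 2 - s ^ 2) := by
        rw [MeasureTheory.integral_const_mul, hlayer, setOf_lt_exp_neg_sq hs0]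
    _ = (2 / Real.pi) * F s := by
        rw [← integral_Ioc_eq_integral_Ioo, ← integral_of_le (neg_le_self (Real.sqrt_nonneg _)),
          integral_neg_eq_two_smul_of_even (by simp) (hcont.intervalIntegrable _ _), F]
        simp_rw [exp_neg_sq_sq]
        ring
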